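/- arXiv:1904.04470 — 7 statements merged into one kernel-verified Lean document; each statement's English description precedes it below -/
import Mathlib

section
/- Let R be a nonzero commutative ring with a subset S and a family T of elements of R such that: (N1) every element of R is uniquely a sum of distinct elements of S; (N2) for all t ∈ T and s ∈ S, t·s ∈ {0, s}; (N3) for any two distinct s, s' ∈ S there exists t ∈ T with exactly one of t·s, t·s' equal to 0. Then any two distinct elements s, s' of S satisfy s·s' = 0. -/
theorem mul_eq_zero_of_mul_eq_zero_of_mul_eq_self {M : Type*} [CommMonoidWithZero M]
    {t s s' : M} (hs : t * s = 0) (hs' : t * s' = s') : s * s' = 0 := by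
  rw [← hs', mul_left_comm, ← mul_assoc, hs, zero_mul]

theorem stmt_1_general {R : Type*} [CommRing R] (S T : Set R)
    (hN2 : ∀ t ∈ T, ∀ s ∈ S, t * s = 0 ∨ t * s = s)
    (hN3 : ∀ s ∈ S, ∀ s' ∈ S, s ≠ s' →
      ∃ t ∈ T, (t * s = 0 ∧ t * s' ≠ 0) ∨ (t * s ≠ 0 ∧ t * s' = 0)) :
    ∀ s ∈ S, ∀ s' ∈ S, s ≠ s' → s * s' = 0 := by
  intro s hs s' hs' hne
  obtain ⟨t, ht, ⟨hts, hts'⟩ | ⟨hts, hts'⟩⟩ := hN3 s hs s' hs' hne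
  · exact mul_eq_zero_of_mul_eq_zero_of_mul_eq_self hts ((hN2 t ht s' hs').resolve_left hts')
  · rw [mul_comm]
    exact mul_eq_zero_of_mul_eq_zero_of_mul_eq_self hts' ((hN2 t ht s hs).resolve_left hts)

/-- Under (N1), (N2), (N3), any two distinct elements of `S`
multiply to `0`. -/
theorem stmt_1 {R : Type*} [CommRing R] [Nontrivial R] (S T : Set R)
    (hN1 : ∀ x : R, ∃! F : Finset R, ↑F ⊆ S ∧ ∑ a ∈ F, a = x)
    (hN2 : ∀ t ∈ T, ∀ s ∈ S, t * s = 0 ∨ t * s = s)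
    (hN3 : ∀ s ∈ S, ∀ s' ∈ S, s ≠ s' →
      ∃ t ∈ T, (t * s = 0 ∧ t * s' ≠ 0) ∨ (t * s ≠ 0 ∧ t * s' = 0)) :
    ∀ s ∈ S, ∀ s' ∈ S, s ≠ s' → s * s' = 0 :=
  stmt_1_general S T hN2 hN3
end

section
/- Let R be a nonzero commutative ring with a subset S and a family T of elements of R satisfying (N1), (N2), (N3) as above, and suppose |S| ≥ 2. Then every element s ∈ S is idempotent: s·s = s. -/
/-!
An element `t ∈ T` separating `a ≠ b` in `S` acts as `0` on one of them and as the identity on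
the other, so `a * b = 0`: distinct elements of `S` are orthogonal. Uniqueness of the expansion
of `0` excludes `0` from `S`. Expanding `1 = ∑ b ∈ G, b` over `S` then gives
`s = s * 1 = ∑ b ∈ G, s * b`, where only the term `b = s` can be nonzero; since `s ≠ 0`,
this forces `s ∈ G` and `s = s * s`.
-/

open Finset

theorem zero_notMem_of_existsUnique_sum_eq_zero {M : Type*} [AddCommMonoid M] {S : Set M}
    (h : ∃! F : Finset M, ↑F ⊆ S ∧ ∑ a ∈ F, a = 0) : 0 ∉ S := fun h0 =>
  singleton_ne_empty 0 <|
    h.unique ⟨by simpa using h0, sum_singleton id 0⟩ ⟨by simp, sum_empty⟩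

theorem mul_eq_zero_of_mul_eq_zero_of_mul_eq_self_s2 {R : Type*} [CommMonoidWithZero R]
    {t a b : R} (ha : t * a = 0) (hb : t * b = b) : a * b = 0 := by
  rw [← hb, mul_left_comm, ← mul_assoc, ha, zero_mul]

theorem pairwise_mul_eq_zero_of_separating {R : Type*} [CommMonoidWithZero R] {S T : Set R}
    (hT : ∀ t ∈ T, ∀ s ∈ S, t * s = 0 ∨ t * s = s)
    (hsep : ∀ s ∈ S, ∀ s' ∈ S, s ≠ s' →
      ∃ t ∈ T, (t * s = 0 ∧ t * s' ≠ 0) ∨ (t * s ≠ 0 ∧ t * s' = 0)) :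
    S.Pairwise fun a b => a * b = 0 := by
  intro a ha b hb hab
  obtain ⟨t, ht, ⟨hta, htb⟩ | ⟨hta, htb⟩⟩ := hsep a ha b hb hab
  · exact mul_eq_zero_of_mul_eq_zero_of_mul_eq_self_s2 hta ((hT t ht b hb).resolve_left htb)
  · rw [mul_comm]
    exact mul_eq_zero_of_mul_eq_zero_of_mul_eq_self_s2 htb ((hT t ht a ha).resolve_left hta)

theorem mul_self_eq_self_of_pairwise_mul_eq_zero {R : Type*} [Semiring R] {S : Set R}
    (horth : S.Pairwise fun a b => a * b = 0) (h0 : (0 : R) ∉ S)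
    (h1 : ∃ G : Finset R, ↑G ⊆ S ∧ ∑ b ∈ G, b = 1) {s : R} (hs : s ∈ S) : s * s = s := by
  obtain ⟨G, hGS, hG⟩ := h1
  have hexpand : s = ∑ b ∈ G, s * b := by rw [← mul_sum, hG, mul_one]
  by_cases hsG : s ∈ G
  · rw [sum_eq_single_of_mem s hsG fun b hb hbs => horth hs (hGS hb) hbs.symm] at hexpand
    exact hexpand.symm
  · rw [sum_eq_zero fun b hb => horth hs (hGS hb) (ne_of_mem_of_not_mem hb hsG).symm] at hexpand
    exact absurd (hexpand ▸ hs) h0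

theorem stmt_2_general {R : Type*} [CommRing R] (S T : Set R)
    (hN1 : ∀ x : R, ∃! F : Finset R, ↑F ⊆ S ∧ ∑ a ∈ F, a = x)
    (hN2 : ∀ t ∈ T, ∀ s ∈ S, t * s = 0 ∨ t * s = s)
    (hN3 : ∀ s ∈ S, ∀ s' ∈ S, s ≠ s' →
      ∃ t ∈ T, (t * s = 0 ∧ t * s' ≠ 0) ∨ (t * s ≠ 0 ∧ t * s' = 0)) :
    ∀ s ∈ S, s * s = s := fun _ hs =>
  mul_self_eq_self_of_pairwise_mul_eq_zero (pairwise_mul_eq_zero_of_separating hN2 hN3)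
    (zero_notMem_of_existsUnique_sum_eq_zero (hN1 0)) (hN1 1).exists hs

/-- Under (N1), (N2), (N3) and `S` having at least two elements,
every element of `S` is idempotent. -/
theorem stmt_2 {R : Type*} [CommRing R] [Nontrivial R] (S T : Set R)
    (hS : ∃ a ∈ S, ∃ b ∈ S, a ≠ b)
    (hN1 : ∀ x : R, ∃! F : Finset R, ↑F ⊆ S ∧ ∑ a ∈ F, a = x)
    (hN2 : ∀ t ∈ T, ∀ s ∈ S, t * s = 0 ∨ t * s = s)
    (hN3 : ∀ s ∈ S, ∀ s' ∈ S, s ≠ s' →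
      ∃ t ∈ T, (t * s = 0 ∧ t * s' ≠ 0) ∨ (t * s ≠ 0 ∧ t * s' = 0)) :
    ∀ s ∈ S, s * s = s :=
  stmt_2_general S T hN1 hN2 hN3
end

section
/- Let R be a nonzero commutative ring with a subset S and a family T satisfying (N1), (N2), (N3), with |S| ≥ 2. Then every element s ∈ S satisfies s + s = 0, i.e., R has characteristic 2 on S. -/
/-!
Let `F` be the representation of `s + s`. Multiplying by `t ∈ T` keeps the summands `a ∈ F` with
`t * a ≠ 0` and kills the others, so by uniqueness the representation of `t * (s + s)` is the part
of `F` that `t` does not kill. If `F` contained some `a ≠ s`, a `t` separating `s` and `a` would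
give either `t * (s + s) = 0` with a surviving summand `a`, or `t * (s + s) = s + s` with a killed
summand `a`. Hence `F ⊆ {s}`, so `s + s` is `0` or `s`, and both force `s + s = 0`.
-/

open Finset

section

variable {R : Type*} [CommRing R] {S : Set R}

theorem eq_of_subset_of_sum_eq (hN1 : ∀ x : R, ∃! F : Finset R, ↑F ⊆ S ∧ ∑ a ∈ F, a = x)
    {F G : Finset R} (hF : ↑F ⊆ S) (hG : ↑G ⊆ S) (hsum : ∑ a ∈ F, a = ∑ a ∈ G, a) : F = G :=
  (hN1 _).unique ⟨hF, hsum⟩ ⟨hG, rfl⟩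

theorem sum_filter_mul_ne_zero [DecidableEq R] {t : R} (ht : ∀ s ∈ S, t * s = 0 ∨ t * s = s)
    {F : Finset R} (hF : ↑F ⊆ S) :
    ∑ a ∈ F with t * a ≠ 0, a = t * ∑ a ∈ F, a := by
  rw [sum_filter, mul_sum]
  refine sum_congr rfl fun a ha => ?_
  rcases ht a (hF ha) with h | h
  · simp [h]
  · by_cases ha0 : a = 0 <;> simp [h, ha0]

theorem sum_self_representation_subset_singleton [DecidableEq R] {T : Set R}
    (hN1 : ∀ x : R, ∃! F : Finset R, ↑F ⊆ S ∧ ∑ a ∈ F, a = x)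
    (hN2 : ∀ t ∈ T, ∀ s ∈ S, t * s = 0 ∨ t * s = s)
    (hN3 : ∀ s ∈ S, ∀ s' ∈ S, s ≠ s' →
      ∃ t ∈ T, (t * s = 0 ∧ t * s' ≠ 0) ∨ (t * s ≠ 0 ∧ t * s' = 0))
    {s : R} (hs : s ∈ S) {F : Finset R} (hF : ↑F ⊆ S) (hFsum : ∑ a ∈ F, a = s + s) :
    F ⊆ {s} := by
  intro a haF
  rw [mem_singleton]
  by_contra has
  obtain ⟨t, htT, hsep⟩ := hN3 s hs a (hF haF) (Ne.symm has)
  have hkept := sum_filter_mul_ne_zero (hN2 t htT) hF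
  have hkeptS : ↑(F.filter (t * · ≠ 0)) ⊆ S := fun x hx => hF (mem_filter.mp hx).1
  rcases hsep with ⟨hts, hta⟩ | ⟨hts, hta⟩
  · have hempty : F.filter (t * · ≠ 0) = ∅ :=
      eq_of_subset_of_sum_eq hN1 hkeptS (by simp) (by rw [hkept, hFsum, mul_add, hts]; simp)
    exact (eq_empty_iff_forall_notMem.mp hempty) a (mem_filter.mpr ⟨haF, hta⟩)
  · have htss : t * s = s := (hN2 t htT s hs).resolve_left hts
    have hall : F.filter (t * · ≠ 0) = F :=
      eq_of_subset_of_sum_eq hN1 hkeptS hF (by rw [hkept, hFsum, mul_add, htss])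
    have hakept : a ∈ F.filter (t * · ≠ 0) := hall.symm ▸ haF
    exact (mem_filter.mp hakept).2 hta

end

theorem stmt_4_general {R : Type*} [CommRing R] (S T : Set R)
    (hN1 : ∀ x : R, ∃! F : Finset R, ↑F ⊆ S ∧ ∑ a ∈ F, a = x)
    (hN2 : ∀ t ∈ T, ∀ s ∈ S, t * s = 0 ∨ t * s = s)
    (hN3 : ∀ s ∈ S, ∀ s' ∈ S, s ≠ s' →
      ∃ t ∈ T, (t * s = 0 ∧ t * s' ≠ 0) ∨ (t * s ≠ 0 ∧ t * s' = 0)) :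
    ∀ s ∈ S, s + s = 0 := by
  classical
  intro s hs
  obtain ⟨F, ⟨hF, hFsum⟩, -⟩ := hN1 (s + s)
  rcases subset_singleton_iff.mp
      (sum_self_representation_subset_singleton hN1 hN2 hN3 hs hF hFsum) with rfl | rfl
  · simpa using hFsum.symm
  · have hs0 : s = 0 := by simpa using hFsum
    simp [hs0]

/-- Under (N1), (N2), (N3) and `S` having at least two elements,
every `s ∈ S` satisfies `s + s = 0`. -/
theorem stmt_4 {R : Type*} [CommRing R] [Nontrivial R] (S T : Set R)
    (hS : ∃ a ∈ S, ∃ b ∈ S, a ≠ b)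
    (hN1 : ∀ x : R, ∃! F : Finset R, ↑F ⊆ S ∧ ∑ a ∈ F, a = x)
    (hN2 : ∀ t ∈ T, ∀ s ∈ S, t * s = 0 ∨ t * s = s)
    (hN3 : ∀ s ∈ S, ∀ s' ∈ S, s ≠ s' →
      ∃ t ∈ T, (t * s = 0 ∧ t * s' ≠ 0) ∨ (t * s ≠ 0 ∧ t * s' = 0)) :
    ∀ s ∈ S, s + s = 0 :=
  stmt_4_general S T hN1 hN2 hN3
end

section
/- Let R be a nonzero commutative ring with subset S satisfying (N1), (N2), (N3) together with a family T, and suppose 1 ∈ S. Then S = {1} and R ≅ F₂. -/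
/-- Under (N1), (N2), (N3), if `1 ∈ S` then `S = {1}` and `R ≅ F₂`. -/
theorem stmt_5 {R : Type*} [CommRing R] [Nontrivial R] (S T : Set R)
    (h1 : (1 : R) ∈ S)
    (hN1 : ∀ x : R, ∃! F : Finset R, ↑F ⊆ S ∧ ∑ a ∈ F, a = x)
    (hN2 : ∀ t ∈ T, ∀ s ∈ S, t * s = 0 ∨ t * s = s)
    (hN3 : ∀ s ∈ S, ∀ s' ∈ S, s ≠ s' →
      ∃ t ∈ T, (t * s = 0 ∧ t * s' ≠ 0) ∨ (t * s ≠ 0 ∧ t * s' = 0)) :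
    S = {1} ∧ Nonempty (R ≃+* ZMod 2) := by
  classical
  -- 0 ∉ S
  have h0 : (0 : R) ∉ S := by
    intro h0S
    obtain ⟨F, _, hFuniq⟩ := hN1 0
    have he : (∅ : Finset R) = F := hFuniq ∅ (by simp)
    have hs : ({0} : Finset R) = F := hFuniq {0} (by simp [h0S])
    rw [← he] at hs
    simp at hs
  -- S = {1}
  have hS : S = {1} := by
    ext s
    constructor
    · intro hsS
      by_contra hne
      simp only [Set.mem_singleton_iff] at hne
      obtain ⟨t, htT, hcase⟩ := hN3 s hsS 1 h1 hne
      have ht1 : t * 1 = 0 ∨ t * 1 = 1 := hN2 t htT 1 h1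
      rw [mul_one] at ht1
      have hts : t * s = 0 ∨ t * s = s := hN2 t htT s hsS
      have hs0 : s ≠ 0 := fun h => h0 (h ▸ hsS)
      rcases ht1 with ht0 | ht1
      · subst ht0
        rcases hcase with ⟨_, h⟩ | ⟨h, _⟩
        · exact h (zero_mul 1)
        · exact h (zero_mul s)
      · subst ht1
        rw [one_mul] at hcase
        rcases hcase with ⟨h, _⟩ | ⟨_, h⟩
        · exact hs0 h
        · rw [one_mul] at h; exact (one_ne_zero : (1:R) ≠ 0) h
    · intro hs
      simp only [Set.mem_singleton_iff] at hs
      exact hs ▸ h1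
  -- every element is 0 or 1
  have hC : ∀ x : R, x = 0 ∨ x = 1 := by
    intro x
    obtain ⟨F, ⟨hFS, hFsum⟩, _⟩ := hN1 x
    rw [hS] at hFS
    have : F ⊆ {1} := by
      intro a ha
      have := hFS ha
      simpa using this
    rcases Finset.subset_singleton_iff.mp this with h | h <;> subst h <;> simp at hFsum
    · exact Or.inl hFsum.symm
    · exact Or.inr hFsum.symm
  -- characteristic 2
  have h2 : (1 : R) + 1 = 0 := by
    rcases hC (1 + 1) with h | h
    · exact h
    · have : (1 : R) = 0 := by linear_combination h
      exact absurd this one_ne_zero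
  refine ⟨hS, ⟨{
    toFun := fun x => if x = 0 then 0 else 1
    invFun := fun n => if n = 0 then 0 else 1
    left_inv := by
      intro x
      rcases hC x with h | h <;> subst h <;> simp
    right_inv := by
      intro n
      fin_cases n <;> simp [(one_ne_zero : (1:R) ≠ 0)] <;> [exact if_pos rfl; exact if_neg (one_ne_zero (α := ZMod 2))]
    map_mul' := by
      intro x y
      rcases hC x with hx | hx <;> rcases hC y with hy | hy <;> subst hx <;> subst hy <;>
        simp
    map_add' := by
      intro x y
      rcases hC x with hx | hx <;> rcases hC y with hy | hy <;> subst hx <;> subst hy <;>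
        simp [h2]
      decide }⟩⟩
end

section
/- A nonzero commutative ring R is isomorphic to the Boolean ring (P(C), Δ, ∩) of subsets of some finite nonempty neural code C ⊆ F₂ⁿ if and only if there exist a finite subset S = {s₁,...,s_r} of R (r ≥ 1) and a finite sequence t₁,...,t_n of elements of R (n ≥ 1) satisfying: (N1) every element of R is uniquely a sum of distinct elements of S; (N2) tᵢ·sⱼ ∈ {0, sⱼ} for all i, j; (N3) for any distinct sⱼ, s_k there exists i with exactly one of tᵢ·sⱼ, tᵢ·s_k equal to 0. -/
/-- Ring equivalence of boolean rings of sets induced by an equivalence of base types. -/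
noncomputable def setCongrBoolRing {α β : Type*} (e : α ≃ β) :
    AsBoolRing (Set α) ≃+* AsBoolRing (Set β) where
  toFun A := toBoolRing (e.symm ⁻¹' (ofBoolRing A))
  invFun B := toBoolRing (e ⁻¹' (ofBoolRing B))
  left_inv A := by simp [Set.preimage_preimage]
  right_inv B := by simp [Set.preimage_preimage]
  map_mul' A B := by
    show toBoolRing (e.symm ⁻¹' (ofBoolRing (A * B))) = _
    rw [ofBoolRing_mul, show ∀ X Y : Set α, e.symm ⁻¹' (X ⊓ Y) = (e.symm ⁻¹' X) ⊓ (e.symm ⁻¹' Y) from fun _ _ => rfl, toBoolRing_inf]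
  map_add' A B := by
    show toBoolRing (e.symm ⁻¹' (ofBoolRing (A + B))) = _
    rw [ofBoolRing_add, Set.preimage_symmDiff, toBoolRing_symmDiff]

lemma sum_singletons {α : Type*} (G : Finset α) :
    ∑ c ∈ G, toBoolRing ({c} : Set α) = toBoolRing (↑G : Set α) := by
  classical
  induction G using Finset.induction_on with
  | empty => simp [← toBoolRing_bot]
  | insert _ _ hc ih =>
    rename_i c G'
    rw [Finset.sum_insert hc, ih, ← toBoolRing_symmDiff]
    congr 1
    rw [Set.symmDiff_def]
    push_cast
    ext x
    simp only [Set.sup_eq_union, Set.mem_union, Set.mem_diff, Set.mem_singleton_iff,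
      Finset.coe_insert, Set.mem_insert_iff, Finset.mem_coe]
    constructor
    · rintro (⟨rfl, -⟩ | ⟨h, -⟩) <;> tauto
    · rintro (rfl | h)
      · exact Or.inl ⟨rfl, fun hx => hc hx⟩
      · refine Or.inr ⟨h, fun hx => hc ?_⟩
        rwa [← hx]


lemma zmod2_cases (a b : ZMod 2) (h : a ≠ b) : (a = 1 ∧ ¬ b = 1) ∨ (¬ a = 1 ∧ b = 1) := by
  revert h; revert a b; decide


lemma rhs_for_code {n : ℕ} (C : Set (Fin n → ZMod 2)) (hC : C.Nonempty) :
    ∃ (S : Finset (AsBoolRing (Set ↥C))) (m : ℕ) (t : Fin m → AsBoolRing (Set ↥C)),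
      S.Nonempty ∧ 1 ≤ m ∧
      (∀ x, ∃! F, F ⊆ S ∧ ∑ a ∈ F, a = x) ∧
      (∀ i, ∀ s ∈ S, t i * s = 0 ∨ t i * s = s) ∧
      (∀ s ∈ S, ∀ s' ∈ S, s ≠ s' → ∃ i,
        (t i * s = 0 ∧ t i * s' ≠ 0) ∨ (t i * s ≠ 0 ∧ t i * s' = 0)) := by
  classical
  haveI : Fintype ↥C := (Set.toFinite C).fintype
  set σ : ↥C → AsBoolRing (Set ↥C) := fun c => toBoolRing ({c} : Set ↥C) with hσ
  have σinj : Function.Injective σ := by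
    intro c c' h
    rw [hσ] at h
    simpa [toBoolRing_inj] using h
  set U : Fin (n+1) → Set ↥C :=
    fun i => {c : ↥C | ∀ h : (i : ℕ) < n, (c : Fin n → ZMod 2) ⟨i, h⟩ = 1} with hU
  refine ⟨Finset.univ.image σ, n+1, fun i => toBoolRing (U i), ?_, Nat.le_add_left 1 n, ?_, ?_, ?_⟩
  · obtain ⟨c0, hc0⟩ := hC
    exact ⟨σ ⟨c0, hc0⟩, Finset.mem_image_of_mem σ (Finset.mem_univ _)⟩
  · -- N1
    intro x
    refine ⟨(ofBoolRing x).toFinset.image σ, ⟨Finset.image_subset_image (Finset.subset_univ _), ?_⟩, ?_⟩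
    · rw [Finset.sum_image (fun a _ b _ h => σinj h), hσ]
      simp only
      rw [sum_singletons, Set.coe_toFinset, toBoolRing_ofBoolRing]
    · rintro F ⟨hFS, hFsum⟩
      set G : Finset ↥C := Finset.univ.filter (fun c => σ c ∈ F) with hG
      have hFG : F = G.image σ := by
        ext f
        simp only [hG, Finset.mem_image, Finset.mem_filter, Finset.mem_univ, true_and]
        constructor
        · intro hf
          obtain ⟨c, -, rfl⟩ := Finset.mem_image.1 (hFS hf)
          exact ⟨c, hf, rfl⟩
        · rintro ⟨c, hc, rfl⟩; exact hc
      have hx : x = toBoolRing (↑G : Set ↥C) := by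
        rw [← hFsum, hFG, Finset.sum_image (fun a _ b _ h => σinj h), hσ]
        exact sum_singletons G
      have hGx : (↑G : Set ↥C) = ofBoolRing x := by
        rw [hx, ofBoolRing_toBoolRing]
      rw [hFG]
      congr 1
      rw [← Finset.coe_inj, Set.coe_toFinset, hGx]
  · -- N2
    intro i s hs
    obtain ⟨c, -, rfl⟩ := Finset.mem_image.1 hs
    by_cases hc : c ∈ U i
    · right
      rw [hσ]
      simp only
      rw [← toBoolRing_inf]
      congr 1
      exact Set.inter_eq_self_of_subset_right (Set.singleton_subset_iff.2 hc)
    · left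
      rw [hσ]
      simp only
      rw [← toBoolRing_inf, ← toBoolRing_bot, toBoolRing_inj]
      show U i ∩ {c} = ∅
      rw [← Set.disjoint_iff_inter_eq_empty]
      exact Set.disjoint_singleton_right.2 hc
  · -- N3
    intro s hs s' hs' hne
    obtain ⟨c, -, rfl⟩ := Finset.mem_image.1 hs
    obtain ⟨c', -, rfl⟩ := Finset.mem_image.1 hs'
    have hcc : c ≠ c' := fun h => hne (by rw [h])
    have hvv : (c : Fin n → ZMod 2) ≠ (c' : Fin n → ZMod 2) := fun h => hcc (Subtype.ext h)
    obtain ⟨j, hj⟩ := Function.ne_iff.1 hvv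
    have hmul : ∀ (d : ↥C), (d : Fin n → ZMod 2) j = 1 →
        toBoolRing (U ⟨j.val, by omega⟩) * σ d ≠ 0 := by
      intro d hd
      rw [hσ]
      simp only
      rw [← toBoolRing_inf, ← toBoolRing_bot, Ne, toBoolRing_inj]
      have hdU : d ∈ U ⟨j.val, by omega⟩ := by
        intro h
        simpa [Fin.eta] using hd
      show ¬ (U ⟨j.val, by omega⟩ ∩ {d} = ∅)
      rw [Set.inter_eq_self_of_subset_right (Set.singleton_subset_iff.2 hdU)]
      exact Set.singleton_ne_empty d
    have hmul0 : ∀ (d : ↥C), ¬ (d : Fin n → ZMod 2) j = 1 →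
        toBoolRing (U ⟨j.val, by omega⟩) * σ d = 0 := by
      intro d hd
      rw [hσ]
      simp only
      rw [← toBoolRing_inf, ← toBoolRing_bot, toBoolRing_inj]
      have hdU : d ∉ U ⟨j.val, by omega⟩ := by
        intro h
        exact hd (by simpa [Fin.eta] using h j.isLt)
      show U ⟨j.val, by omega⟩ ∩ {d} = ∅
      rw [← Set.disjoint_iff_inter_eq_empty]
      exact Set.disjoint_singleton_right.2 hdU
    refine ⟨⟨j.val, by omega⟩, ?_⟩
    rcases zmod2_cases _ _ hj with ⟨h1, h2⟩ | ⟨h1, h2⟩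
    · exact Or.inr ⟨hmul c h1, hmul0 c' h2⟩
    · exact Or.inl ⟨hmul0 c h1, hmul c' h2⟩



lemma backward_main {R : Type*} [CommRing R] [Nontrivial R]
    (S : Finset R) (n : ℕ) (t : Fin n → R) (hS : S.Nonempty) (hn : 1 ≤ n)
    (hN1 : ∀ x : R, ∃! F : Finset R, F ⊆ S ∧ ∑ a ∈ F, a = x)
    (hN2 : ∀ i : Fin n, ∀ s ∈ S, t i * s = 0 ∨ t i * s = s)
    (hN3 : ∀ s ∈ S, ∀ s' ∈ S, s ≠ s' → ∃ i : Fin n,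
      (t i * s = 0 ∧ t i * s' ≠ 0) ∨ (t i * s ≠ 0 ∧ t i * s' = 0)) :
    ∃ (m : ℕ) (C : Set (Fin m → ZMod 2)), C.Nonempty ∧
      Nonempty (R ≃+* AsBoolRing (Set ↥C)) := by
  classical
  -- 0 is not in S
  have h0 : (0 : R) ∉ S := by
    intro h0S
    obtain ⟨F, ⟨hFS, hFsum⟩, huniq⟩ := hN1 0
    have h1 : insert (0:R) F ⊆ S := Finset.insert_subset h0S hFS
    have h2 : ∑ a ∈ insert (0:R) F, a = 0 := by
      by_cases h : (0:R) ∈ F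
      · rwa [Finset.insert_eq_self.2 h]
      · rwa [Finset.sum_insert h, zero_add]
    have h3 : F.erase 0 ⊆ S := (Finset.erase_subset _ _).trans hFS
    have h4 : ∑ a ∈ F.erase 0, a = 0 := by
      by_cases h : (0:R) ∈ F
      · have := Finset.add_sum_erase F (fun a => a) h
        rw [zero_add] at this
        rw [this]; exact hFsum
      · rwa [Finset.erase_eq_of_notMem h]
    have e1 := huniq _ ⟨h1, h2⟩
    have e2 := huniq _ ⟨h3, h4⟩
    have hin : (0:R) ∈ F := e1 ▸ Finset.mem_insert_self 0 F
    have hout : (0:R) ∉ F := by rw [← e2]; exact Finset.notMem_erase 0 F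
    exact hout hin
  have hSne : ∀ s ∈ S, s ≠ 0 := fun s hs h => h0 (h ▸ hs)
  -- the code vector of an element
  set v : R → (Fin n → ZMod 2) := fun s i => if t i * s = 0 then 0 else 1 with hv
  have vinj : ∀ s ∈ S, ∀ s' ∈ S, v s = v s' → s = s' := by
    intro s hs s' hs' hvv
    by_contra hne
    obtain ⟨i, hi⟩ := hN3 s hs s' hs' hne
    have := congrFun hvv i
    rw [hv] at this
    simp only at this
    rcases hi with ⟨hi1, hi2⟩ | ⟨hi1, hi2⟩ <;> simp [hi1, hi2] at this
  -- the separating products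
  set p : R → R := fun s => ∏ i, (if t i * s = 0 then (1 - t i) else t i) with hp
  have factor : ∀ s ∈ S, ∀ s' ∈ S, ∀ i : Fin n,
      (if t i * s = 0 then (1 - t i) else t i) * s' =
        if (t i * s = 0 ↔ t i * s' = 0) then s' else 0 := by
    intro s hs s' hs' i
    by_cases h : t i * s = 0
    · rw [if_pos h]
      by_cases h' : t i * s' = 0
      · rw [if_pos (iff_of_true h h'), sub_mul, one_mul, h', sub_zero]
      · rw [if_neg (fun hc : _ ↔ _ => h' (hc.1 h))]
        have hts' := (hN2 i s' hs').resolve_left h'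
        rw [sub_mul, one_mul, hts', sub_self]
    · rw [if_neg h]
      by_cases h' : t i * s' = 0
      · rw [if_neg (fun hc : _ ↔ _ => h (hc.2 h')), h']
      · have hts' := (hN2 i s' hs').resolve_left h'
        rw [if_pos (iff_of_false h h'), hts']
  have key : ∀ s ∈ S, ∀ s' ∈ S, p s * s' = if v s = v s' then s' else 0 := by
    intro s hs s' hs'
    have main : ∀ I : Finset (Fin n),
        (∏ i ∈ I, (if t i * s = 0 then (1 - t i) else t i)) * s' =
          if (∀ i ∈ I, (t i * s = 0 ↔ t i * s' = 0)) then s' else 0 := by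
      intro I
      induction I using Finset.induction_on with
      | empty => simp
      | insert _ _ hni ih =>
        rename_i i I'
        rw [Finset.prod_insert hni, mul_assoc, ih]
        by_cases hAll : ∀ j ∈ I', (t j * s = 0 ↔ t j * s' = 0)
        · rw [if_pos hAll, factor s hs s' hs']
          by_cases hi : (t i * s = 0 ↔ t i * s' = 0)
          · rw [if_pos hi, if_pos]
            intro j hj
            rcases Finset.mem_insert.1 hj with rfl | hj'
            · exact hi
            · exact hAll j hj'
          · rw [if_neg hi, if_neg]
            intro hcon
            exact hi (hcon i (Finset.mem_insert_self i I'))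
        · rw [if_neg hAll, mul_zero, if_neg]
          intro hcon
          exact hAll fun j hj => hcon j (Finset.mem_insert_of_mem hj)
    rw [hp]
    simp only
    rw [main Finset.univ]
    congr 1
    simp only [Finset.mem_univ, true_implies, eq_iff_iff]
    constructor
    · intro h
      funext i
      rw [hv]
      simp only
      by_cases hi : t i * s = 0
      · rw [if_pos hi, if_pos ((h i).1 hi)]
      · rw [if_neg hi, if_neg (fun hc => hi ((h i).2 hc))]
    · intro h i
      have := congrFun h i
      rw [hv] at this
      simp only at this
      by_cases hi : t i * s = 0 <;> by_cases hi' : t i * s' = 0 <;>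
        simp [hi, hi'] at this ⊢
  have keyd : ∀ s ∈ S, ∀ s' ∈ S, p s * s' = if s = s' then s' else 0 := by
    intro s hs s' hs'
    rw [key s hs s' hs']
    by_cases h : s = s'
    · rw [if_pos h, if_pos (h ▸ rfl)]
    · rw [if_neg h, if_neg (fun hc => h (vinj s hs s' hs' hc))]
  -- action of p s on an element with representation F
  have hps : ∀ (x : R) (F : Finset R), F ⊆ S → ∑ a ∈ F, a = x →
      ∀ s ∈ S, p s * x = if s ∈ F then s else 0 := by
    intro x F hFS hFsum s hs
    rw [← hFsum, Finset.mul_sum]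
    have : ∀ a ∈ F, p s * a = if a = s then s else 0 := by
      intro a ha
      rw [keyd s hs a (hFS ha)]
      by_cases h : s = a
      · rw [if_pos h, if_pos h.symm, h]
      · rw [if_neg h, if_neg (fun hc => h hc.symm)]
    rw [Finset.sum_congr rfl this, Finset.sum_ite_eq' F s (fun _ => s)]
  -- products of distinct elements of S vanish
  have smulS : ∀ s ∈ S, ∀ s' ∈ S, s ≠ s' → s * s' = 0 := by
    intro s hs s' hs' hne
    obtain ⟨F, ⟨hFS, hFsum⟩, -⟩ := hN1 (s * s')
    have hFempty : F = ∅ := by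
      rw [Finset.eq_empty_iff_forall_notMem]
      intro a ha
      have ha' : a ∈ S := hFS ha
      have h1 : p a * (s * s') = a := by
        rw [hps (s * s') F hFS hFsum a ha', if_pos ha]
      have h2 : p a * (s * s') = 0 := by
        by_cases h : a = s
        · rw [show p a * (s * s') = (p a * s') * s by ring, keyd a ha' s' hs',
            if_neg (h ▸ hne), zero_mul]
        · rw [← mul_assoc, keyd a ha' s hs, if_neg h, zero_mul]
      exact hSne a ha' (by rw [← h1, h2])
    rw [← hFsum, hFempty, Finset.sum_empty]
  -- idempotence, and 1 = sum of S
  obtain ⟨F₁, ⟨hF₁S, hF₁sum⟩, -⟩ := hN1 1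
  have idemAux : ∀ s ∈ S, s = if s ∈ F₁ then s * s else 0 := by
    intro s hs
    have : ∀ a ∈ F₁, s * a = if a = s then s * s else 0 := by
      intro a ha
      by_cases h : a = s
      · rw [if_pos h, h]
      · rw [if_neg h, smulS s hs a (hF₁S ha) (fun hc => h hc.symm)]
    calc s = s * 1 := (mul_one s).symm
    _ = ∑ a ∈ F₁, s * a := by rw [← hF₁sum, Finset.mul_sum]
    _ = ∑ a ∈ F₁, if a = s then s * s else 0 := Finset.sum_congr rfl this
    _ = if s ∈ F₁ then s * s else 0 := Finset.sum_ite_eq' F₁ s (fun _ => s * s)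
  have idem : ∀ s ∈ S, s * s = s := by
    intro s hs
    have := idemAux s hs
    by_cases h : s ∈ F₁
    · rw [if_pos h] at this; exact this.symm
    · rw [if_neg h] at this; exact absurd this (hSne s hs)
  -- multiplication of s ∈ S by arbitrary x lands in {0, s}
  have smulx : ∀ s ∈ S, ∀ x : R, ∀ (F : Finset R), F ⊆ S → ∑ a ∈ F, a = x →
      s * x = if s ∈ F then s else 0 := by
    intro s hs x F hFS hFsum
    have : ∀ a ∈ F, s * a = if a = s then s else 0 := by
      intro a ha
      by_cases h : a = s
      · rw [if_pos h, h, idem s hs]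
      · rw [if_neg h, smulS s hs a (hFS ha) (fun hc => h hc.symm)]
    rw [← hFsum, Finset.mul_sum, Finset.sum_congr rfl this,
      Finset.sum_ite_eq' F s (fun _ => s)]
  have sx01 : ∀ s ∈ S, ∀ x : R, s * x = 0 ∨ s * x = s := by
    intro s hs x
    obtain ⟨F, ⟨hFS, hFsum⟩, -⟩ := hN1 x
    rw [smulx s hs x F hFS hFsum]
    by_cases h : s ∈ F
    · right; rw [if_pos h]
    · left; rw [if_neg h]
  -- characteristic two on S
  have char2 : ∀ s ∈ S, s + s = 0 := by
    intro s hs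
    obtain ⟨F, ⟨hFS, hFsum⟩, -⟩ := hN1 (s + s)
    have hsub : F ⊆ {s} := by
      intro a ha
      have ha' : a ∈ S := hFS ha
      have h1 : p a * (s + s) = a := by
        rw [hps (s + s) F hFS hFsum a ha', if_pos ha]
      rw [Finset.mem_singleton]
      by_contra h
      have h2 : p a * (s + s) = 0 := by
        rw [mul_add, keyd a ha' s hs, if_neg h, add_zero]
      exact hSne a ha' (by rw [← h1, h2])
    rcases Finset.subset_singleton_iff.1 hsub with rfl | rfl
    · rw [← hFsum, Finset.sum_empty]
    · exfalso
      rw [Finset.sum_singleton] at hFsum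
      have : s = 0 := by linear_combination -hFsum
      exact hSne s hs this
  -- the canonical representation
  have reconstr : ∀ x : R, x = ∑ s ∈ S.filter (fun s => s * x = s), s := by
    intro x
    obtain ⟨F, ⟨hFS, hFsum⟩, -⟩ := hN1 x
    have : S.filter (fun s => s * x = s) = F := by
      ext s
      simp only [Finset.mem_filter]
      constructor
      · rintro ⟨hsS, hsx⟩
        by_contra h
        rw [smulx s hsS x F hFS hFsum, if_neg h] at hsx
        exact hSne s hsS hsx.symm
      · intro hsF
        refine ⟨hFS hsF, ?_⟩
        rw [smulx s (hFS hsF) x F hFS hFsum, if_pos hsF]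
    rw [this, hFsum]
  -- the map into the boolean ring of subsets of S
  set e : R → Set ↥S := fun x => {s : ↥S | (s : R) * x = s} with he
  have einj : Function.Injective e := by
    intro x y hxy
    have : S.filter (fun s => s * x = s) = S.filter (fun s => s * y = s) := by
      ext s
      simp only [Finset.mem_filter, and_congr_right_iff]
      intro hsS
      have := Set.ext_iff.1 hxy ⟨s, hsS⟩
      simpa [he] using this
    rw [reconstr x, reconstr y, this]
  have esurj : Function.Surjective e := by
    intro A
    haveI : Fintype ↥S := FinsetCoe.fintype S
    refine ⟨∑ s ∈ A.toFinset, (s : R), ?_⟩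
    ext s
    rw [he]
    simp only [Set.mem_setOf_eq]
    rw [Finset.mul_sum]
    have : ∀ a ∈ A.toFinset, (s : R) * a = if a = s then (s : R) else 0 := by
      intro a ha
      by_cases h : a = s
      · rw [if_pos h, h, idem s s.2]
      · rw [if_neg h, smulS s s.2 a a.2 (fun hc => h (Subtype.ext hc.symm))]
    rw [Finset.sum_congr rfl this, Finset.sum_ite_eq' A.toFinset s (fun _ => (s : R))]
    by_cases h : s ∈ A
    · rw [if_pos (Set.mem_toFinset.2 h)]
      simp [h]
    · rw [if_neg (fun hc => h (Set.mem_toFinset.1 hc))]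
      simp only [h, iff_false]
      exact fun hc => hSne s s.2 hc.symm
  have emul : ∀ x y : R, e (x * y) = e x ∩ e y := by
    intro x y
    ext s
    simp only [he, Set.mem_setOf_eq, Set.mem_inter_iff]
    have hzs : ¬ ((0:R) = ↑s) := fun hc => hSne s s.2 hc.symm
    rcases sx01 s s.2 x with hx | hx
    · rw [← mul_assoc, hx, zero_mul]
      simp [hzs]
    · rw [← mul_assoc, hx]
      simp
  have eadd : ∀ x y : R, e (x + y) = symmDiff (e x) (e y) := by
    intro x y
    ext s
    rw [Set.mem_symmDiff]
    simp only [he, Set.mem_setOf_eq]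
    have hzs : ¬ ((0:R) = ↑s) := fun hc => hSne s s.2 hc.symm
    rw [mul_add]
    rcases sx01 s s.2 x with hx | hx <;> rcases sx01 s s.2 y with hy | hy <;> rw [hx, hy]
    · simp [hzs]
    · simp [hzs]
    · simp [hzs]
    · rw [char2 s s.2]
      simp [hzs]
  have eone : e 1 = Set.univ := by
    ext s
    simp [he]
  -- assemble the ring equivalence R ≃+* AsBoolRing (Set ↥S)
  set Φ : R → AsBoolRing (Set ↥S) := fun x => toBoolRing (e x) with hΦ
  have Φhom_mul : ∀ x y, Φ (x * y) = Φ x * Φ y := by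
    intro x y
    rw [hΦ]
    simp only
    rw [emul, ← toBoolRing_inf]
    rfl
  have Φhom_add : ∀ x y, Φ (x + y) = Φ x + Φ y := by
    intro x y
    rw [hΦ]
    simp only
    rw [eadd, ← toBoolRing_symmDiff]
  have Φhom_one : Φ 1 = 1 := by
    rw [hΦ]
    simp only
    rw [eone, ← toBoolRing_top]
    rfl
  have Φbij : Function.Bijective Φ := by
    constructor
    · intro x y hxy
      exact einj (toBoolRing_inj.1 hxy)
    · intro A
      obtain ⟨x, hx⟩ := esurj (ofBoolRing A)
      exact ⟨x, by rw [hΦ]; simp only; rw [hx, toBoolRing_ofBoolRing]⟩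
  let Φhom : R →+* AsBoolRing (Set ↥S) :=
    RingHom.mk' ⟨⟨Φ, Φhom_one⟩, Φhom_mul⟩ Φhom_add
  let Ψ : R ≃+* AsBoolRing (Set ↥S) := RingEquiv.ofBijective Φhom Φbij
  -- transfer along the injection into the code
  set w : ↥S → (Fin n → ZMod 2) := fun s => v (s : R) with hw
  have winj : Function.Injective w := by
    intro s s' hss
    exact Subtype.ext (vinj s s.2 s' s'.2 hss)
  refine ⟨n, Set.range w, ?_, ?_⟩
  · obtain ⟨s0, hs0⟩ := hS
    exact ⟨w ⟨s0, hs0⟩, Set.mem_range_self _⟩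
  · exact ⟨Ψ.trans (setCongrBoolRing (Equiv.ofInjective w winj))⟩


lemma rhs_transport {R R' : Type*} [CommRing R] [CommRing R'] (e : R' ≃+* R)
    (S' : Finset R') (m : ℕ) (t' : Fin m → R')
    (h1 : S'.Nonempty) (h2 : 1 ≤ m)
    (h3 : ∀ x : R', ∃! F : Finset R', F ⊆ S' ∧ ∑ a ∈ F, a = x)
    (h4 : ∀ i : Fin m, ∀ s ∈ S', t' i * s = 0 ∨ t' i * s = s)
    (h5 : ∀ s ∈ S', ∀ s'' ∈ S', s ≠ s'' → ∃ i : Fin m,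
      (t' i * s = 0 ∧ t' i * s'' ≠ 0) ∨ (t' i * s ≠ 0 ∧ t' i * s'' = 0)) :
    ∃ (S : Finset R) (n : ℕ) (t : Fin n → R), S.Nonempty ∧ 1 ≤ n ∧
      (∀ x : R, ∃! F : Finset R, F ⊆ S ∧ ∑ a ∈ F, a = x) ∧
      (∀ i : Fin n, ∀ s ∈ S, t i * s = 0 ∨ t i * s = s) ∧
      (∀ s ∈ S, ∀ s'' ∈ S, s ≠ s'' → ∃ i : Fin n,
        (t i * s = 0 ∧ t i * s'' ≠ 0) ∨ (t i * s ≠ 0 ∧ t i * s'' = 0)) := by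
  classical
  have einj : Function.Injective e := e.injective
  have hsum : ∀ F' : Finset R', ∑ a ∈ F'.image e, a = e (∑ a ∈ F', a) := by
    intro F'
    rw [Finset.sum_image (fun a _ b _ h => einj h), map_sum]
  have hz : ∀ x : R', e x = 0 ↔ x = 0 := by
    intro x
    constructor
    · intro h; apply einj; rw [h, map_zero]
    · intro h; rw [h, map_zero]
  refine ⟨S'.image e, m, fun i => e (t' i), h1.image e, h2, ?_, ?_, ?_⟩
  · intro x
    obtain ⟨F', ⟨hFS', hFsum'⟩, huniq'⟩ := h3 (e.symm x)
    refine ⟨F'.image e, ⟨Finset.image_subset_image hFS', ?_⟩, ?_⟩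
    · rw [hsum, hFsum', RingEquiv.apply_symm_apply]
    · rintro F ⟨hFS, hFsum⟩
      set G' : Finset R' := F.image e.symm with hG'
      have hGS' : G' ⊆ S' := by
        intro a ha
        obtain ⟨f, hf, rfl⟩ := Finset.mem_image.1 ha
        obtain ⟨s', hs', rfl⟩ := Finset.mem_image.1 (hFS hf)
        rwa [RingEquiv.symm_apply_apply]
      have hGsum' : ∑ a ∈ G', a = e.symm x := by
        rw [hG', Finset.sum_image (fun a _ b _ h => e.symm.injective h), ← map_sum, hFsum]
      have hGF' : G' = F' := huniq' G' ⟨hGS', hGsum'⟩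
      rw [← hGF', hG', Finset.image_image]
      have : (e : R' → R) ∘ (e.symm : R → R') = id := by
        funext a; simp
      rw [this, Finset.image_id]
  · intro i s hs
    obtain ⟨s', hs', rfl⟩ := Finset.mem_image.1 hs
    rcases h4 i s' hs' with h | h
    · left; rw [← map_mul, h, map_zero]
    · right; rw [← map_mul, h]
  · intro s hs s'' hs'' hne
    obtain ⟨a, ha, rfl⟩ := Finset.mem_image.1 hs
    obtain ⟨b, hb, rfl⟩ := Finset.mem_image.1 hs''
    have hab : a ≠ b := fun h => hne (by rw [h])
    obtain ⟨i, hi⟩ := h5 a ha b hb hab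
    refine ⟨i, ?_⟩
    rcases hi with ⟨hi1, hi2⟩ | ⟨hi1, hi2⟩
    · exact Or.inl ⟨by rw [← map_mul, hi1, map_zero],
        fun hc => hi2 ((hz _).1 (by rwa [map_mul]))⟩
    · exact Or.inr ⟨fun hc => hi1 ((hz _).1 (by rwa [map_mul])),
        by rw [← map_mul, hi2, map_zero]⟩


/-- A nonzero commutative ring `R` is isomorphic to the Boolean ring
`(P(C), Δ, ∩)` of some nonempty neural code `C ⊆ F₂ⁿ` if and only if there exist
a nonempty finite subset `S` of `R` and a finite sequence `t : Fin n → R` (`n ≥ 1`)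
satisfying (N1), (N2), (N3). -/
theorem stmt_6 {R : Type*} [CommRing R] [Nontrivial R] :
    (∃ (n : ℕ) (C : Set (Fin n → ZMod 2)), C.Nonempty ∧
        Nonempty (R ≃+* AsBoolRing (Set ↥C))) ↔
    (∃ (S : Finset R) (n : ℕ) (t : Fin n → R), S.Nonempty ∧ 1 ≤ n ∧
        (∀ x : R, ∃! F : Finset R, F ⊆ S ∧ ∑ a ∈ F, a = x) ∧
        (∀ i : Fin n, ∀ s ∈ S, t i * s = 0 ∨ t i * s = s) ∧
        (∀ s ∈ S, ∀ s' ∈ S, s ≠ s' → ∃ i : Fin n,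
          (t i * s = 0 ∧ t i * s' ≠ 0) ∨ (t i * s ≠ 0 ∧ t i * s' = 0))) := by
  constructor
  · rintro ⟨n, C, hC, ⟨φ⟩⟩
    obtain ⟨S', m, t', h1, h2, h3, h4, h5⟩ := rhs_for_code C hC
    exact rhs_transport φ.symm S' m t' h1 h2 h3 h4 h5
  · rintro ⟨S, n, t, hS, hn, hN1, hN2, hN3⟩
    exact backward_main S n t hS hn hN1 hN2 hN3
end

section
/- The 'adding a trunk neuron' map is monomial: for a code C ⊆ F₂ⁿ and α ⊆ {1,...,n}, the map atn : C → F₂^{n+1} sending w to w1 if w ∈ Tk_α(C) and to w0 otherwise, considered as a map onto its image D, satisfies atn⁻¹(Tk_i(D)) = Tk_i(C) for i ≤ n and atn⁻¹(Tk_{n+1}(D)) = Tk_α(C); in particular atn is a monomial map. -/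
open scoped Classical

/-- The trunk of a code `C`, as a subset of `C`, determined by `α`. -/
def trunkIn {n : ℕ} (C : Set (Fin n → ZMod 2)) (α : Set (Fin n)) : Set ↥C :=
  {w : ↥C | ∀ i ∈ α, w.1 i = 1}

/-- A code map `q : C → D` is monomial if the preimage of every simple trunk of
`D` is a trunk of `C` or empty. -/
def IsMonomialMap {n m : ℕ} {C : Set (Fin n → ZMod 2)} {D : Set (Fin m → ZMod 2)}
    (q : ↥C → ↥D) : Prop :=
  ∀ j : Fin m,
    (∃ α : Set (Fin n), q ⁻¹' trunkIn D {j} = trunkIn C α) ∨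
    q ⁻¹' trunkIn D {j} = ∅

/-- The ambient "adding a trunk neuron" map: append `1` if `w ∈ Tk_α(C)`,
else append `0`. -/
noncomputable def atnFun {n : ℕ} (α : Set (Fin n)) (w : Fin n → ZMod 2) :
    Fin (n + 1) → ZMod 2 :=
  Fin.snoc w (if ∀ i ∈ α, w i = 1 then 1 else 0)

/-- The "adding a trunk neuron" code map `atn : C → D = atn(C)`. -/
noncomputable def atn {n : ℕ} (C : Set (Fin n → ZMod 2)) (α : Set (Fin n)) :
    ↥C → ↥(atnFun α '' C) :=
  fun w => ⟨atnFun α w.1, ⟨w.1, w.2, rfl⟩⟩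

section AddTrunkNeuron

variable {n : ℕ}

@[simp]
theorem atnFun_castSucc (α : Set (Fin n)) (w : Fin n → ZMod 2) (i : Fin n) :
    atnFun α w (Fin.castSucc i) = w i :=
  Fin.snoc_castSucc ..

theorem atnFun_last_eq_one_iff (α : Set (Fin n)) (w : Fin n → ZMod 2) :
    atnFun α w (Fin.last n) = 1 ↔ ∀ i ∈ α, w i = 1 := by
  rw [atnFun, Fin.snoc_last]
  split_ifs with h
  · exact iff_of_true rfl h
  · exact iff_of_false (by decide) h

variable (C : Set (Fin n → ZMod 2)) (α : Set (Fin n))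

theorem atn_preimage_trunkIn_castSucc (i : Fin n) :
    atn C α ⁻¹' trunkIn (atnFun α '' C) {Fin.castSucc i} = trunkIn C {i} := by
  ext w
  simp [trunkIn, atn]

theorem atn_preimage_trunkIn_last :
    atn C α ⁻¹' trunkIn (atnFun α '' C) {Fin.last n} = trunkIn C α := by
  ext w
  simp only [trunkIn, atn, Set.mem_preimage, Set.mem_ofPred_eq, Set.mem_singleton_iff,
    forall_eq]
  exact atnFun_last_eq_one_iff α w

theorem isMonomialMap_atn : IsMonomialMap (atn C α) := by
  intro j
  left
  induction j using Fin.lastCases with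
  | last => exact ⟨α, atn_preimage_trunkIn_last C α⟩
  | cast i => exact ⟨{i}, atn_preimage_trunkIn_castSucc C α i⟩

end AddTrunkNeuron

/-- For the map `atn : C → D` adding a trunk neuron, the preimage
of the `i`-th simple trunk of `D` is the `i`-th simple trunk of `C` for `i ≤ n`,
the preimage of the `(n+1)`-st simple trunk of `D` is `Tk_α(C)`, and in
particular `atn` is a monomial map. -/
theorem stmt_15 {n : ℕ} (C : Set (Fin n → ZMod 2)) (α : Set (Fin n)) :
    (∀ i : Fin n,
      atn C α ⁻¹' trunkIn (atnFun α '' C) {Fin.castSucc i} = trunkIn C {i}) ∧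
    atn C α ⁻¹' trunkIn (atnFun α '' C) {Fin.last n} = trunkIn C α ∧
    IsMonomialMap (atn C α) :=
  ⟨atn_preimage_trunkIn_castSucc C α, atn_preimage_trunkIn_last C α, isMonomialMap_atn C α⟩
end

section
/- Let C ⊆ F₂^m be a code, i ∈ {1,...,m}, and q = del_i : C → D = q(C) the map deleting the i-th coordinate. Then q is a monomial isomorphism (i.e., q is bijective and both q and q⁻¹ are monomial maps) if and only if neuron i is redundant or constant zero in C, where neuron i is redundant means: not all words of C have 0 in position i, and there exists α ⊆ {1,...,m} with i ∉ α and Tk_i(C) = Tk_α(C); and constant zero means every word of C has 0 in position i. -/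
/-- `q` is a monomial isomorphism if it is a bijection, it is monomial, and its
inverse is monomial. -/
def IsMonomialIso {n m : ℕ} {C : Set (Fin n → ZMod 2)} {D : Set (Fin m → ZMod 2)}
    (q : ↥C → ↥D) : Prop :=
  IsMonomialMap q ∧
  ∃ p : ↥D → ↥C, Function.LeftInverse p q ∧ Function.RightInverse p q ∧
    IsMonomialMap p

/-- Neuron `i` is redundant (to some `α` not containing `i`). -/
def Redundant {m : ℕ} (C : Set (Fin m → ZMod 2)) (i : Fin m) : Prop :=
  (¬ ∀ w ∈ C, w i = 0) ∧
  ∃ α : Set (Fin m), i ∉ α ∧ trunkIn C {i} = trunkIn C α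

/-!
Deleting coordinate `i` is always surjective onto its image and monomial: the preimage of the
simple trunk at `k` is the trunk at `i.succAbove k`. When it is injective, its inverse pulls a
trunk back to its image, and the image of a trunk avoiding `i` is again a trunk, so the only
condition is at `i` itself: the image of `Tk_i(C)` must be empty (neuron `i` is constant zero)
or a trunk `Tk_β(D)`, whose preimage `Tk_{succAbove '' β}(C)` then equals `Tk_i(C)` (neuron `i`
is redundant). Conversely, either condition makes the deletion injective, since the value at `i`
is then determined by the other coordinates.
-/

lemma ZMod.two_eq_of_eq_one_iff {x y : ZMod 2} (h : x = 1 ↔ y = 1) : x = y := by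
  revert x y; decide

section Trunk

variable {n : ℕ} (C : Set (Fin n → ZMod 2))

@[simp]
lemma mem_trunkIn_singleton {w : ↥C} {j : Fin n} : w ∈ trunkIn C {j} ↔ w.1 j = 1 := by
  simp [trunkIn]

lemma trunkIn_singleton_eq_empty_iff (j : Fin n) :
    trunkIn C {j} = ∅ ↔ ∀ w ∈ C, w j = 0 := by
  have h : ∀ x : ZMod 2, ¬ x = 1 ↔ x = 0 := by decide
  simp [Set.eq_empty_iff_forall_notMem, h]

lemma isMonomialMap_iff_of_inverse {m : ℕ} {D : Set (Fin m → ZMod 2)} {q : ↥C → ↥D}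
    {p : ↥D → ↥C} (hpq : Function.LeftInverse p q) (hqp : Function.RightInverse p q) :
    IsMonomialMap p ↔ ∀ j : Fin n,
      (∃ β : Set (Fin m), q '' trunkIn C {j} = trunkIn D β) ∨ q '' trunkIn C {j} = ∅ := by
  rw [Set.image_eq_preimage_of_inverse hpq hqp]
  rfl

end Trunk

section Deletion

variable {m : ℕ} (C : Set (Fin (m + 1) → ZMod 2)) (i : Fin (m + 1))

def deleteMap : ↥C → ↥((fun w => w ∘ i.succAbove) '' C) :=
  fun w => ⟨w.1 ∘ i.succAbove, w.1, w.2, rfl⟩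

lemma deleteMap_surjective : Function.Surjective (deleteMap C i) := by
  rintro ⟨-, w, hw, rfl⟩
  exact ⟨⟨w, hw⟩, rfl⟩

lemma preimage_deleteMap_trunkIn (β : Set (Fin m)) :
    deleteMap C i ⁻¹' trunkIn _ β = trunkIn C (i.succAbove '' β) := by
  ext w
  simp [trunkIn, deleteMap]

lemma isMonomialMap_deleteMap : IsMonomialMap (deleteMap C i) :=
  fun k => Or.inl ⟨_, preimage_deleteMap_trunkIn C i {k}⟩

lemma image_deleteMap_trunkIn {α : Set (Fin (m + 1))} (hi : i ∉ α) :
    deleteMap C i '' trunkIn C α = trunkIn _ (i.succAbove ⁻¹' α) := by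
  have hα : i.succAbove '' (i.succAbove ⁻¹' α) = α := by
    rw [Set.image_preimage_eq_inter_range, Fin.range_succAbove,
      Set.inter_eq_left.2 (Set.subset_compl_singleton_iff.2 hi)]
  rw [← Set.image_preimage_eq (trunkIn _ _) (deleteMap_surjective C i),
    preimage_deleteMap_trunkIn, hα]

lemma trunkIn_eq_of_image_deleteMap (hinj : Function.Injective (deleteMap C i))
    {α : Set (Fin (m + 1))} {β : Set (Fin m)}
    (h : deleteMap C i '' trunkIn C α = trunkIn _ β) :
    trunkIn C α = trunkIn C (i.succAbove '' β) := by
  rw [← preimage_deleteMap_trunkIn, ← h, hinj.preimage_image]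

lemma deleteMap_injective (h : Redundant C i ∨ ∀ w ∈ C, w i = 0) :
    Function.Injective (deleteMap C i) := by
  intro w w' hww'
  have hoff : ∀ j ≠ i, w.1 j = w'.1 j := by
    intro j hj
    obtain ⟨k, rfl⟩ := Fin.exists_succAbove_eq hj
    exact congrFun (congrArg Subtype.val hww') k
  have hi : w.1 i = w'.1 i := by
    rcases h with ⟨-, α, hiα, hα⟩ | hzero
    · -- membership in `Tk_α(C)` only sees coordinates in `α`, which avoid `i`
      have transfer : ∀ u u' : ↥C, (∀ j ≠ i, u.1 j = u'.1 j) → u.1 i = 1 → u'.1 i = 1 := by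
        intro u u' huu' hu
        rw [← mem_trunkIn_singleton, hα] at hu ⊢
        exact fun j hj => huu' j (ne_of_mem_of_not_mem hj hiα) ▸ hu j hj
      exact ZMod.two_eq_of_eq_one_iff
        ⟨transfer w w' hoff, transfer w' w fun j hj => (hoff j hj).symm⟩
    · rw [hzero _ w.2, hzero _ w'.2]
  refine Subtype.ext (funext fun j => ?_)
  rcases eq_or_ne j i with rfl | hj
  exacts [hi, hoff j hj]

end Deletion

/-- deleting the `i`-th neuron is a monomial isomorphism onto its
image iff neuron `i` is redundant or constant zero. -/
theorem stmt_18 {m : ℕ} (C : Set (Fin (m + 1) → ZMod 2)) (i : Fin (m + 1)) :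
    IsMonomialIso
      (fun w : ↥C =>
        (⟨w.1 ∘ i.succAbove, ⟨w.1, w.2, rfl⟩⟩ :
          ↥((fun w => w ∘ i.succAbove) '' C))) ↔
    (Redundant C i ∨ ∀ w ∈ C, w i = 0) := by
  change IsMonomialIso (deleteMap C i) ↔ _
  constructor
  · rintro ⟨-, p, hpq, hqp, hp⟩
    by_cases hzero : ∀ w ∈ C, w i = 0
    · exact Or.inr hzero
    refine Or.inl ⟨hzero, ?_⟩
    rcases (isMonomialMap_iff_of_inverse C hpq hqp).1 hp i with ⟨β, hβ⟩ | hempty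
    · refine ⟨i.succAbove '' β, ?_, trunkIn_eq_of_image_deleteMap C i hpq.injective hβ⟩
      rintro ⟨k, -, hk⟩
      exact i.succAbove_ne k hk
    · rw [Set.image_eq_empty, trunkIn_singleton_eq_empty_iff] at hempty
      exact absurd hempty hzero
  · intro h
    let e := Equiv.ofBijective _ ⟨deleteMap_injective C i h, deleteMap_surjective C i⟩
    refine ⟨isMonomialMap_deleteMap C i, e.symm, e.left_inv, e.right_inv,
      (isMonomialMap_iff_of_inverse C e.left_inv e.right_inv).2 fun j => ?_⟩
    rcases eq_or_ne j i with rfl | hj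
    · rcases h with ⟨-, α, hjα, hα⟩ | hzero
      · exact Or.inl ⟨_, hα ▸ image_deleteMap_trunkIn C j hjα⟩
      · rw [(trunkIn_singleton_eq_empty_iff C j).2 hzero, Set.image_empty]
        exact Or.inr rfl
    · exact Or.inl ⟨_, image_deleteMap_trunkIn C i (Set.notMem_singleton_iff.2 hj.symm)⟩
end
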